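/- Let ε, η, K₀, D̄, β_K be positive real constants, let J₀ be a real symmetric positive-definite 3×3 matrix with largest eigenvalue λ_max, let K* > D̄, and let γ satisfy 0 < γ < η·K₀/(β_K + ε). Let d̄ : ℝ → ℝ³ satisfy ‖d̄(t)‖₂ < D̄ for all t, let K : ℝ → ℝ be differentiable with K(0) ≥ K₀, K(t) ≤ K* for all t ≥ 0, and K'(t) = η·(‖u(t)‖₂ − K(t) + K₀) for all t ≥ 0, where u(t) := −(K(t)/ε)·s(t), and let s : ℝ → ℝ³ be differentiable with s'(t) = J₀⁻¹·u(t) + λ_max⁻¹·d̄(t). Define V(t) := (1/2)·s(t)ᵀ J₀ s(t) + (1/(2γ))·(K(t) − K*)². Then there exists a constant β > 0, depending only on ε, η, K₀, D̄, β_K, K*, γ, and λ_max, such that for every t ≥ 0 with ‖s(t)‖₂ > ε, the derivative of V satisfies V'(t) < −β·√(V(t)). -/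

import Mathlib

/-
Along the closed loop `V' = -(K/ε)‖s‖² + λ⁻¹ sᵀJ₀d̄ + (K - K*)K'/γ`. Since every eigenvalue of
`J₀` is at most `λ`, Cauchy–Schwarz for the inner product `xᵀJ₀y` bounds the disturbance term by
`D̄‖s‖`, and the adaptation law keeps `K ≥ K₀` because `(K - K₀)e^{ηt}` is nondecreasing. For
`‖s‖ > ε` the gain condition `γ(β_K + ε) < ηK₀` makes `-V'` dominate `(K* - D̄)‖s‖ + β_K(K* - K)`,
while `√V ≤ √(λ/2)‖s‖ + (K* - K)/√(2γ)`; hence `β = min((K* - D̄)√(2/λ), β_K√(2γ))` works.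
-/

/-- Euclidean norm on `ℝ³`. -/
noncomputable def norm2 (x : Fin 3 → ℝ) : ℝ := Real.sqrt (∑ i, x i ^ 2)

open Matrix Module.End

theorem norm2_nonneg (x : Fin 3 → ℝ) : 0 ≤ norm2 x := Real.sqrt_nonneg _

theorem sq_norm2 (x : Fin 3 → ℝ) : norm2 x ^ 2 = x ⬝ᵥ x := by
  rw [norm2, Real.sq_sqrt (Finset.sum_nonneg fun i _ => sq_nonneg (x i))]
  simp only [dotProduct, sq]

theorem norm2_smul (c : ℝ) (x : Fin 3 → ℝ) : norm2 (c • x) = |c| * norm2 x := by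
  simp only [norm2, Pi.smul_apply, smul_eq_mul, mul_pow, ← Finset.mul_sum]
  rw [Real.sqrt_mul (sq_nonneg c), Real.sqrt_sq_eq_abs]

namespace Matrix

section

variable {n : Type*} [Fintype n] {A : Matrix n n ℝ}

theorem IsHermitian.dotProduct_mulVec_comm (hA : A.IsHermitian) (x y : n → ℝ) :
    x ⬝ᵥ A *ᵥ y = y ⬝ᵥ A *ᵥ x := by
  rw [dotProduct_mulVec, ← vecMul_transpose, ← conjTranspose_eq_transpose_of_trivial, hA.eq,
    dotProduct_comm]

theorem PosSemidef.sq_dotProduct_mulVec_le (hA : A.PosSemidef) (x y : n → ℝ) :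
    (x ⬝ᵥ A *ᵥ y) ^ 2 ≤ (x ⬝ᵥ A *ᵥ x) * (y ⬝ᵥ A *ᵥ y) := by
  let := A.toSeminormedAddCommGroup hA
  let := A.toInnerProductSpace hA
  have h := real_inner_mul_inner_self_le x y
  change (A *ᵥ y ⬝ᵥ star x) * (A *ᵥ y ⬝ᵥ star x) ≤ (A *ᵥ x ⬝ᵥ star x) * (A *ᵥ y ⬝ᵥ star y) at h
  simpa only [star_trivial, dotProduct_comm _ x, dotProduct_comm _ y, sq] using h

variable [DecidableEq n] {μ lam : ℝ}

theorem hasEigenvalue_toLin'_iff_mem_spectrum :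
    HasEigenvalue (toLin' A) μ ↔ μ ∈ spectrum ℝ A := by
  rw [hasEigenvalue_iff_mem_spectrum, spectrum_toLin']

theorem PosDef.pos_of_hasEigenvalue (hA : A.PosDef) (hμ : HasEigenvalue (toLin' A) μ) :
    0 < μ := by
  rw [hasEigenvalue_toLin'_iff_mem_spectrum, hA.isHermitian.spectrum_eq_image_range] at hμ
  obtain ⟨_, ⟨i, rfl⟩, rfl⟩ := hμ
  exact hA.eigenvalues_pos i

theorem IsHermitian.dotProduct_mulVec_le (hA : A.IsHermitian)
    (hlam : lam ∈ upperBounds {μ | HasEigenvalue (toLin' A) μ}) (x : n → ℝ) :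
    x ⬝ᵥ A *ᵥ x ≤ lam * (x ⬝ᵥ x) := by
  have hpsd : (algebraMap ℝ (Matrix n n ℝ) lam - A).PosSemidef := by
    refine posSemidef_iff_isHermitian_and_spectrum_nonneg.2 ⟨?_, ?_⟩
    · rw [Algebra.algebraMap_eq_smul_one]
      exact (isHermitian_one.smul (IsSelfAdjoint.all lam)).sub hA
    · rw [← spectrum.singleton_sub_eq]
      rintro _ ⟨_, rfl, ν, hν, rfl⟩
      exact sub_nonneg.2 (hlam (hasEigenvalue_toLin'_iff_mem_spectrum.2 hν))
  have h := hpsd.dotProduct_mulVec_nonneg x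
  rwa [star_trivial, Algebra.algebraMap_eq_smul_one, sub_mulVec, smul_mulVec, one_mulVec,
    dotProduct_sub, dotProduct_smul, smul_eq_mul, sub_nonneg] at h

end

end Matrix

theorem dotProduct_mulVec_le_mul_norm2 {A : Matrix (Fin 3) (Fin 3) ℝ} {lam : ℝ}
    (hA : A.PosSemidef) (hlam : lam ∈ upperBounds {μ | HasEigenvalue (toLin' A) μ})
    (hlam₀ : 0 ≤ lam) (x y : Fin 3 → ℝ) :
    x ⬝ᵥ A *ᵥ y ≤ lam * (norm2 x * norm2 y) := by
  refine le_of_sq_le_sq ?_ (mul_nonneg hlam₀ (mul_nonneg (norm2_nonneg x) (norm2_nonneg y)))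
  calc (x ⬝ᵥ A *ᵥ y) ^ 2 ≤ (x ⬝ᵥ A *ᵥ x) * (y ⬝ᵥ A *ᵥ y) := hA.sq_dotProduct_mulVec_le x y
    _ ≤ (lam * (x ⬝ᵥ x)) * (lam * (y ⬝ᵥ y)) :=
      mul_le_mul (hA.isHermitian.dotProduct_mulVec_le hlam x)
        (hA.isHermitian.dotProduct_mulVec_le hlam y)
        (by simpa using hA.dotProduct_mulVec_nonneg y)
        (by rw [← sq_norm2]; positivity)
    _ = (lam * (norm2 x * norm2 y)) ^ 2 := by rw [← sq_norm2, ← sq_norm2]; ring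

section Calculus

variable {𝕜 : Type*} [NontriviallyNormedField 𝕜] {n : Type*} [Fintype n] {f g : 𝕜 → n → 𝕜}
  {f' g' : n → 𝕜} {x : 𝕜}

theorem HasDerivAt.dotProduct (hf : HasDerivAt f f' x) (hg : HasDerivAt g g' x) :
    HasDerivAt (fun t => f t ⬝ᵥ g t) (f' ⬝ᵥ g x + f x ⬝ᵥ g') x := by
  have h := HasDerivAt.fun_sum (u := Finset.univ) fun i _ =>
    (hasDerivAt_pi.1 hf i).fun_mul (hasDerivAt_pi.1 hg i)
  rw [Finset.sum_add_distrib] at h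
  exact h

theorem HasDerivAt.mulVec (A : Matrix n n 𝕜) (hf : HasDerivAt f f' x) :
    HasDerivAt (fun t => A *ᵥ f t) (A *ᵥ f') x :=
  hasDerivAt_pi.2 fun i => HasDerivAt.fun_sum fun j _ => (hasDerivAt_pi.1 hf j).const_mul (A i j)

end Calculus

noncomputable def lyapunov {n : Type*} [Fintype n] (A : Matrix n n ℝ) (γ Kstar : ℝ)
    (s : ℝ → n → ℝ) (K : ℝ → ℝ) (τ : ℝ) : ℝ :=
  (1 / 2 : ℝ) * s τ ⬝ᵥ A *ᵥ s τ + 1 / (2 * γ) * (K τ - Kstar) ^ 2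

theorem hasDerivAt_lyapunov {n : Type*} [Fintype n] {A : Matrix n n ℝ} (hA : A.IsHermitian)
    {γ Kstar t K' : ℝ} {s : ℝ → n → ℝ} {K : ℝ → ℝ} {s' : n → ℝ} (hs : HasDerivAt s s' t)
    (hK : HasDerivAt K K' t) :
    HasDerivAt (lyapunov A γ Kstar s K) (s t ⬝ᵥ A *ᵥ s' + (K t - Kstar) * K' / γ) t := by
  refine (((hs.dotProduct (hs.mulVec A)).const_mul (1 / 2 : ℝ)).add
    (((hK.sub_const Kstar).pow 2).const_mul (1 / (2 * γ)))).congr_deriv ?_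
  rw [hA.dotProduct_mulVec_comm s']
  field_simp
  ring

theorem deriv_lyapunov_of_closed_loop {J : Matrix (Fin 3) (Fin 3) ℝ} (hJ : J.PosDef)
    {γ Kstar ε η K₀ lam t : ℝ} {s u d : ℝ → Fin 3 → ℝ} {K : ℝ → ℝ}
    (hs : DifferentiableAt ℝ s t) (hK : DifferentiableAt ℝ K t) (hgain : 0 ≤ K t / ε)
    (hu : u t = -(K t / ε) • s t) (hKlaw : deriv K t = η * (norm2 (u t) - K t + K₀))
    (hsd : deriv s t = J⁻¹ *ᵥ u t + lam⁻¹ • d t) :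
    deriv (lyapunov J γ Kstar s K) t = -(K t / ε) * norm2 (s t) ^ 2
      + lam⁻¹ * (s t ⬝ᵥ J *ᵥ d t)
      - η / γ * (Kstar - K t) * (K t / ε * norm2 (s t) - K t + K₀) := by
  have hJs' : J *ᵥ deriv s t = -(K t / ε) • s t + lam⁻¹ • J *ᵥ d t := by
    rw [hsd, mulVec_add, mulVec_mulVec, mul_nonsing_inv _ (isUnit_iff_ne_zero.2 hJ.det_pos.ne'),
      one_mulVec, mulVec_smul, hu]
  have hnu : norm2 (u t) = K t / ε * norm2 (s t) := by
    rw [hu, norm2_smul, abs_neg, abs_of_nonneg hgain]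
  rw [(hasDerivAt_lyapunov hJ.isHermitian hs.hasDerivAt hK.hasDerivAt).deriv, hJs',
    dotProduct_add, dotProduct_smul, dotProduct_smul, ← sq_norm2, hKlaw, hnu, smul_eq_mul,
    smul_eq_mul]
  ring

theorem le_of_mul_sub_le_deriv {f : ℝ → ℝ} {a c η : ℝ} (hf : Differentiable ℝ f) (ha : c ≤ f a)
    (hf' : ∀ t, a < t → η * (c - f t) ≤ deriv f t) {t : ℝ} (ht : a ≤ t) : c ≤ f t := by
  set g : ℝ → ℝ := fun τ => (f τ - c) * Real.exp (η * τ)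
  have hg : ∀ τ, HasDerivAt g ((deriv f τ - η * (c - f τ)) * Real.exp (η * τ)) τ := fun τ =>
    (((hf τ).hasDerivAt.sub_const c).fun_mul ((hasDerivAt_id' τ).const_mul η).exp).congr_deriv
      (by ring)
  have hmono : MonotoneOn g (Set.Ici a) := by
    refine monotoneOn_of_deriv_nonneg (convex_Ici a)
      (fun τ _ => (hg τ).continuousAt.continuousWithinAt)
      (fun τ _ => (hg τ).differentiableAt.differentiableWithinAt) fun τ hτ => ?_
    rw [interior_Ici] at hτ
    rw [(hg τ).deriv]
    exact mul_nonneg (sub_nonneg.2 (hf' τ hτ)) (Real.exp_pos _).le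
  have hgt : 0 ≤ g t :=
    (mul_nonneg (sub_nonneg.2 ha) (Real.exp_pos _).le).trans (hmono Set.self_mem_Ici ht ht)
  exact sub_nonneg.1 (nonneg_of_mul_nonneg_left hgt (Real.exp_pos _))

theorem mul_sqrt_add_le {β p q A B : ℝ} (hβ : 0 ≤ β) (hA : 0 ≤ A) (hB : 0 ≤ B)
    (hp : β ^ 2 * p ≤ A ^ 2) (hq : β ^ 2 * q ≤ B ^ 2) : β * √(p + q) ≤ A + B :=
  calc β * √(p + q) = √(β ^ 2 * (p + q)) := by rw [Real.sqrt_mul (sq_nonneg β), Real.sqrt_sq hβ]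
    _ ≤ √((A + B) ^ 2) := Real.sqrt_le_sqrt (by nlinarith [mul_nonneg hA hB])
    _ = A + B := Real.sqrt_sq (add_nonneg hA hB)

theorem mul_sqrt_lyapunov_le {A : Matrix (Fin 3) (Fin 3) ℝ} {lam : ℝ} (hA : A.IsHermitian)
    (hlam : lam ∈ upperBounds {μ | HasEigenvalue (toLin' A) μ}) (hlam₀ : 0 < lam)
    {β c βK γ Kstar t : ℝ} {s : ℝ → Fin 3 → ℝ} {K : ℝ → ℝ} (hβ : 0 ≤ β) (hc : 0 ≤ c)
    (hβK : 0 ≤ βK) (hγ : 0 < γ) (hK : K t ≤ Kstar) (hβc : β ≤ c * √(2 / lam))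
    (hβγ : β ≤ βK * √(2 * γ)) :
    β * √(lyapunov A γ Kstar s K t) ≤ c * norm2 (s t) + βK * (Kstar - K t) := by
  have hβc' : β ^ 2 * lam ≤ 2 * c ^ 2 := by
    have h := pow_le_pow_left₀ hβ hβc 2
    rw [mul_pow, Real.sq_sqrt (by positivity), mul_div_assoc', le_div_iff₀ hlam₀] at h
    linarith
  have hβγ' : β ^ 2 ≤ 2 * γ * βK ^ 2 := by
    have h := pow_le_pow_left₀ hβ hβγ 2
    rw [mul_pow, Real.sq_sqrt (by positivity)] at h
    linarith
  have hQ : s t ⬝ᵥ A *ᵥ s t ≤ lam * norm2 (s t) ^ 2 := by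
    rw [sq_norm2]
    exact hA.dotProduct_mulVec_le hlam _
  refine mul_sqrt_add_le hβ (mul_nonneg hc (norm2_nonneg _)) (mul_nonneg hβK (by linarith)) ?_ ?_
  · nlinarith [mul_le_mul_of_nonneg_left hQ (sq_nonneg β),
      mul_le_mul_of_nonneg_right hβc' (sq_nonneg (norm2 (s t)))]
  · rw [div_mul_eq_mul_div, one_mul, mul_div_assoc', div_le_iff₀ (by positivity)]
    nlinarith [mul_le_mul_of_nonneg_right hβγ' (sq_nonneg (K t - Kstar))]

/-- With `a = ‖s‖` and `k = K`, this is the part of `-V'` that has to dominate the disturbance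
and `β√V`. -/
theorem reaching_margin {ε η γ βK K₀ Kstar a k : ℝ} (hε : 0 < ε) (hγ : 0 < γ) (hη : 0 ≤ η)
    (hβK : 0 ≤ βK) (hK₀ : 0 ≤ K₀) (hgain : γ * (βK + ε) ≤ η * K₀) (ha : ε ≤ a) (hk : K₀ ≤ k)
    (hkK : k ≤ Kstar) :
    Kstar * a + βK * (Kstar - k) ≤ k / ε * a ^ 2 + η / γ * (Kstar - k) * (k / ε * a - k + K₀) := by
  set m := η / γ
  set r := a / ε
  have hm : βK + ε ≤ m * K₀ := by
    rw [div_mul_eq_mul_div, le_div_iff₀ hγ]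
    linarith
  have hr : 1 ≤ r := by rwa [le_div_iff₀ hε, one_mul]
  have har : a = r * ε := (div_mul_cancel₀ a hε.ne').symm
  have hkr : k / ε * a = k * r := by
    rw [har]
    field_simp
  have hbracket : r * ε + βK ≤ m * (k * (r - 1) + K₀) := by
    nlinarith [mul_le_mul_of_nonneg_right hm (by linarith : (0 : ℝ) ≤ r),
      mul_nonneg (div_nonneg hη hγ.le) (mul_nonneg (sub_nonneg.2 hk) (sub_nonneg.2 hr))]
  rw [sq, ← mul_assoc, hkr, har]
  nlinarith [mul_le_mul_of_nonneg_left hbracket (sub_nonneg.2 hkK),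
    mul_nonneg (mul_nonneg (hK₀.trans hk) (by linarith : (0 : ℝ) ≤ r * ε)) (sub_nonneg.2 hr)]

theorem acs_reaching_condition_general
    (ε η K₀ Dbar βK Kstar γ lmax : ℝ)
    (J₀ : Matrix (Fin 3) (Fin 3) ℝ) (hpd : J₀.PosDef)
    (hlmax : IsGreatest {μ : ℝ | Module.End.HasEigenvalue (Matrix.toLin' J₀) μ} lmax)
    (hε : 0 < ε) (hη : 0 < η) (hK₀ : 0 < K₀) (hβK : 0 < βK)
    (hKs : Dbar < Kstar) (hγ : 0 < γ) (hγ2 : γ < η * K₀ / (βK + ε))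
    (d : ℝ → Fin 3 → ℝ) (hd : ∀ t, norm2 (d t) < Dbar)
    (K : ℝ → ℝ) (hKdiff : Differentiable ℝ K) (hK0 : K₀ ≤ K 0)
    (hKub : ∀ t, 0 ≤ t → K t ≤ Kstar)
    (s : ℝ → Fin 3 → ℝ) (hs : Differentiable ℝ s)
    (u : ℝ → Fin 3 → ℝ) (hu : ∀ t, u t = -(K t / ε) • s t)
    (hKlaw : ∀ t, 0 ≤ t → deriv K t = η * (norm2 (u t) - K t + K₀))
    (hsd : ∀ t, deriv s t = Matrix.mulVec J₀⁻¹ (u t) + lmax⁻¹ • d t) :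
    ∃ β > 0, ∀ t, 0 ≤ t → ε < norm2 (s t) →
      deriv (fun τ => (1 / 2 : ℝ) * dotProduct (s τ) (Matrix.mulVec J₀ (s τ))
          + (1 / (2 * γ)) * (K τ - Kstar) ^ 2) t
        < -β * Real.sqrt ((1 / 2 : ℝ) * dotProduct (s t) (Matrix.mulVec J₀ (s t))
              + (1 / (2 * γ)) * (K t - Kstar) ^ 2) := by
  have hlam : 0 < lmax := hpd.pos_of_hasEigenvalue hlmax.1
  obtain ⟨β, hβ, hβ₁, hβ₂⟩ : ∃ β > 0, β ≤ (Kstar - Dbar) * √(2 / lmax) ∧ β ≤ βK * √(2 * γ) :=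
    ⟨_, lt_min (mul_pos (by linarith) (by positivity)) (by positivity), min_le_left _ _,
      min_le_right _ _⟩
  refine ⟨β, hβ, fun t ht hst => ?_⟩
  change deriv (lyapunov J₀ γ Kstar s K) t < -β * √(lyapunov J₀ γ Kstar s K t)
  have hk : K₀ ≤ K t := le_of_mul_sub_le_deriv hKdiff hK0 (fun τ hτ => by
    rw [hKlaw τ hτ.le]; nlinarith [norm2_nonneg (u τ)]) ht
  have hdist : lmax⁻¹ * (s t ⬝ᵥ J₀ *ᵥ d t) < Dbar * norm2 (s t) := by
    rw [inv_mul_lt_iff₀ hlam]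
    calc s t ⬝ᵥ J₀ *ᵥ d t ≤ lmax * (norm2 (s t) * norm2 (d t)) :=
          dotProduct_mulVec_le_mul_norm2 hpd.posSemidef hlmax.2 hlam.le _ _
      _ < lmax * (Dbar * norm2 (s t)) := by
          rw [mul_comm Dbar]
          exact mul_lt_mul_of_pos_left (mul_lt_mul_of_pos_left (hd t) (hε.trans hst)) hlam
  have hmargin := reaching_margin hε hγ hη.le hβK.le hK₀.le
    ((lt_div_iff₀ (by positivity)).1 hγ2).le hst.le hk (hKub t ht)
  have hsqrt := mul_sqrt_lyapunov_le (s := s) hpd.isHermitian hlmax.2 hlam hβ.le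
    (sub_nonneg.2 hKs.le) hβK.le hγ (hKub t ht) hβ₁ hβ₂
  rw [deriv_lyapunov_of_closed_loop hpd (hs t) (hKdiff t) (div_nonneg (hK₀.le.trans hk) hε.le)
    (hu t) (hKlaw t ht) (hsd t)]
  linarith

/-- Theorem 2 (ACS reaching condition): with the adaptive smooth control
`u = −(K/ε)s`, adaptation law `K' = η(‖u‖₂ − K + K₀)`, bounded disturbance,
`K ≤ K*` with `K* > D̄`, and `γ < η·K₀/(β_K + ε)`, the Lyapunov function
`V = ½ sᵀ J₀ s + (1/2γ)(K − K*)²` satisfies `V' < −β√V` whenever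
`‖s‖₂ > ε`, for some constant `β > 0`. -/
theorem acs_reaching_condition
    (ε η K₀ Dbar βK Kstar γ lmax : ℝ)
    (J₀ : Matrix (Fin 3) (Fin 3) ℝ) (hsymm : J₀.IsSymm) (hpd : J₀.PosDef)
    (hlmax : IsGreatest {μ : ℝ | Module.End.HasEigenvalue (Matrix.toLin' J₀) μ} lmax)
    (hε : 0 < ε) (hη : 0 < η) (hK₀ : 0 < K₀) (hD : 0 < Dbar) (hβK : 0 < βK)
    (hKs : Dbar < Kstar) (hγ : 0 < γ) (hγ2 : γ < η * K₀ / (βK + ε))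
    (d : ℝ → Fin 3 → ℝ) (hd : ∀ t, norm2 (d t) < Dbar)
    (K : ℝ → ℝ) (hKdiff : Differentiable ℝ K) (hK0 : K₀ ≤ K 0)
    (hKub : ∀ t, 0 ≤ t → K t ≤ Kstar)
    (s : ℝ → Fin 3 → ℝ) (hs : Differentiable ℝ s)
    (u : ℝ → Fin 3 → ℝ) (hu : ∀ t, u t = -(K t / ε) • s t)
    (hKlaw : ∀ t, 0 ≤ t → deriv K t = η * (norm2 (u t) - K t + K₀))
    (hsd : ∀ t, deriv s t = Matrix.mulVec J₀⁻¹ (u t) + lmax⁻¹ • d t) :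
    ∃ β > 0, ∀ t, 0 ≤ t → ε < norm2 (s t) →
      deriv (fun τ => (1 / 2 : ℝ) * dotProduct (s τ) (Matrix.mulVec J₀ (s τ))
          + (1 / (2 * γ)) * (K τ - Kstar) ^ 2) t
        < -β * Real.sqrt ((1 / 2 : ℝ) * dotProduct (s t) (Matrix.mulVec J₀ (s t))
              + (1 / (2 * γ)) * (K t - Kstar) ^ 2) :=
  acs_reaching_condition_general ε η K₀ Dbar βK Kstar γ lmax J₀ hpd hlmax hε hη hK₀ hβK hKs hγ hγ2 d
    hd K hKdiff hK0 hKub s hs u hu hKlaw hsd
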